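/- Let F be a field, f(t) = t^n + c_{n-1}t^{n-1} + ... + c_0, and let C be the Frobenius companion matrix of f. Let d_1,...,d_n ∈ F with d_n = -c_{n-1} - d_1 - ... - d_{n-1}, define b_k = -∑_{i=k-1}^n c_i h_{i-k+1}(d_1,...,d_k) (with c_n = 1), and let A be the matrix with diagonal (d_1,...,d_n), subdiagonal 1's, last column (b_1,...,b_{n-1},d_n), zeros elsewhere. Let T be the upper triangular n×n matrix with entries T_{ij} = h_{j-i}(d_1,...,d_i) for i ≤ j and 0 otherwise. Then AT = TC. -/

import Mathlib

/-- `hfun d r k` is the complete homogeneous symmetric polynomial of degree `r`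
in the first `k` values `d 0, …, d (k-1)`. -/
def hfun {F : Type*} [CommRing F] (d : ℕ → F) : ℕ → ℕ → F
  | 0, _ => 1
  | _ + 1, 0 => 0
  | r + 1, k + 1 => hfun d (r + 1) k + d k * hfun d r (k + 1)
  termination_by r k => (r, k)

/-- The matrix with diagonal `d 0, …, d (n-1)`, subdiagonal entries `1`,
last column entries `b` above the diagonal, and zeros elsewhere. -/
def matA {F : Type*} [Field F] (n : ℕ) (d : ℕ → F) (b : Fin (n - 1) → F) :
    Matrix (Fin n) (Fin n) F :=
  Matrix.of fun i j =>
    if i = j then d i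
    else if (i : ℕ) = (j : ℕ) + 1 then 1
    else if (j : ℕ) = n - 1 then (if h : (i : ℕ) < n - 1 then b ⟨i, h⟩ else 0)
    else 0

/-- The Frobenius companion matrix of `t^n + c_{n-1} t^{n-1} + ⋯ + c_0`:
subdiagonal entries `1`, last column `(-c_0, …, -c_{n-1})`, zeros elsewhere. -/
def compMat {F : Type*} [Field F] (n : ℕ) (c : ℕ → F) :
    Matrix (Fin n) (Fin n) F :=
  Matrix.of fun i j =>
    if (i : ℕ) = (j : ℕ) + 1 then 1
    else if (j : ℕ) = n - 1 then -c i
    else 0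

/-- The upper triangular matrix `T` with `T i j = h_{j-i}(d_1, …, d_{i+1})`
for `i ≤ j` (zero-indexed) and `0` otherwise. -/
def matT {F : Type*} [Field F] (n : ℕ) (d : ℕ → F) :
    Matrix (Fin n) (Fin n) F :=
  Matrix.of fun i j =>
    if (i : ℕ) ≤ (j : ℕ) then hfun d ((j : ℕ) - (i : ℕ)) ((i : ℕ) + 1) else 0

/-! Write `t i j` for the entries of `T`. Since `C` shifts the standard basis, column `j < n - 1`
of `TC` is column `j + 1` of `T`, and the identity in that column is the recurrence
`h_{r+1}(d_1, …, d_{i+1}) = h_{r+1}(d_1, …, d_i) + d_{i+1} h_r(d_1, …, d_{i+1})`, that is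
`d_i t_{ij} + t_{i-1,j} = t_{i,j+1}`. In the last column, extend `b` to row `n` by the same formula:
the hypothesis on `d_n` says exactly that this entry vanishes, as the last column of `A` requires,
and the recurrence once more turns row `i` of the identity into the defining formula for `b_i`. -/

section hfun

variable {F : Type*} [CommRing F] (d : ℕ → F)

@[simp] lemma hfun_zero (k : ℕ) : hfun d 0 k = 1 := by rw [hfun]

@[simp] lemma hfun_succ_zero (r : ℕ) : hfun d (r + 1) 0 = 0 := by rw [hfun]

lemma hfun_succ_succ (r k : ℕ) :
    hfun d (r + 1) (k + 1) = hfun d (r + 1) k + d k * hfun d r (k + 1) := by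
  rw [hfun]

lemma hfun_one (k : ℕ) : hfun d 1 k = ∑ i ∈ Finset.range k, d i := by
  induction k with
  | zero => simp
  | succ k ih => rw [hfun_succ_succ, hfun_zero, Finset.sum_range_succ, ih, mul_one]

def triEntry (i j : ℕ) : F := if i ≤ j then hfun d (j - i) (i + 1) else 0

@[simp] lemma triEntry_self (i : ℕ) : triEntry d i i = 1 := by simp [triEntry]

lemma triEntry_of_lt {i j : ℕ} (h : j < i) : triEntry d i j = 0 := if_neg (by omega)

lemma triEntry_succ_right (i j : ℕ) :
    triEntry d i (j + 1) = d i * triEntry d i j + if i = 0 then 0 else triEntry d (i - 1) j := by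
  rcases i with _ | i
  · simp [triEntry, hfun_succ_succ d j 0]
  · simp only [triEntry, Nat.add_sub_cancel, add_eq_zero, one_ne_zero, and_false, if_false]
    rcases lt_trichotomy (i + 1) (j + 1) with h | h | h
    · rw [if_pos h.le, if_pos (by omega), if_pos (by omega),
        show j + 1 - (i + 1) = (j - (i + 1)) + 1 by omega, hfun_succ_succ,
        show j - (i + 1) + 1 = j - i by omega, add_comm]
    · obtain rfl : i = j := by omega
      simp
    · rw [if_neg (by omega), if_neg (by omega), if_neg (by omega)]
      simp

lemma sum_Icc_mul_hfun_eq_sum_range (c : ℕ → F) (i n : ℕ) :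
    ∑ k ∈ Finset.Icc i n, c k * hfun d (k - i) (i + 1) =
      ∑ k ∈ Finset.range (n + 1), c k * triEntry d i k := by
  simp only [triEntry, mul_ite, mul_zero, ← Finset.sum_filter]
  congr 1
  ext k
  simp only [Finset.mem_Icc, Finset.mem_filter, Finset.mem_range]
  omega

end hfun

def zeroExtend {F : Type*} [Zero F] {m : ℕ} (b : Fin m → F) (i : ℕ) : F :=
  if h : i < m then b ⟨i, h⟩ else 0

lemma zeroExtend_of_le {F : Type*} [Zero F] {m : ℕ} (b : Fin m → F) {i : ℕ} (h : m ≤ i) :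
    zeroExtend b i = 0 :=
  dif_neg (by omega)

lemma sum_range_ite_succ_eq {F : Type*} [AddCommMonoid F] (v : ℕ → F) {i n : ℕ}
    (hi : i ≤ n) :
    ∑ k ∈ Finset.range n, (if k + 1 = i then v k else 0) = if i = 0 then 0 else v (i - 1) := by
  rcases i with _ | i
  · simp
  · simp only [add_left_inj, Finset.sum_ite_eq', Finset.mem_range, add_eq_zero, one_ne_zero,
      and_false, if_false, Nat.add_sub_cancel]
    exact if_pos (by omega)

section matrices

variable {F : Type*} [Field F] {n : ℕ} (d : ℕ → F)

lemma matT_apply (i j : Fin n) : matT n d i j = triEntry d i j := rfl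

lemma matA_mul_matT_apply (b : Fin (n - 1) → F) (i j : Fin n) :
    (matA n d b * matT n d) i j =
      d i * triEntry d i j + (if (i : ℕ) = 0 then 0 else triEntry d (i - 1) j) +
        zeroExtend b i * triEntry d (n - 1) j := by
  let a : ℕ → F := fun k => if (i : ℕ) = k then d i else if (i : ℕ) = k + 1 then 1
    else if k = n - 1 then zeroExtend b i else 0
  have row : ∀ k ∈ Finset.range n, a k * triEntry d k j =
      ((if k = i then d i * triEntry d k j else 0) + (if k + 1 = i then triEntry d k j else 0)) +
        if k = n - 1 then zeroExtend b i * triEntry d k j else 0 := by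
    intro k hk
    have := Finset.mem_range.1 hk
    dsimp only [a]
    split_ifs <;> first | omega | (rw [zeroExtend_of_le b (by omega)]; ring) | ring
  calc (matA n d b * matT n d) i j = ∑ k : Fin n, a k * triEntry d k j := by
        simp only [Matrix.mul_apply, matA, matT_apply, Matrix.of_apply, Fin.ext_iff]; rfl
    _ = ∑ k ∈ Finset.range n, a k * triEntry d k j :=
        Fin.sum_univ_eq_sum_range (fun k => a k * triEntry d k j) n
    _ = _ := by
      have := i.is_lt
      rw [Finset.sum_congr rfl row, Finset.sum_add_distrib, Finset.sum_add_distrib,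
        Finset.sum_ite_eq', Finset.sum_ite_eq', sum_range_ite_succ_eq _ this.le,
        if_pos (Finset.mem_range.2 this), if_pos (Finset.mem_range.2 (by omega))]

lemma matT_mul_compMat_apply (c : ℕ → F) (i j : Fin n) :
    (matT n d * compMat n c) i j =
      if (j : ℕ) = n - 1 then -∑ k ∈ Finset.range n, c k * triEntry d i k
      else triEntry d i (j + 1) := by
  simp only [Matrix.mul_apply, compMat, matT_apply, Matrix.of_apply]
  split_ifs with hj
  · rw [← Fin.sum_univ_eq_sum_range (fun k => c k * triEntry d i k), ← Finset.sum_neg_distrib]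
    refine Finset.sum_congr rfl fun k _ => ?_
    rw [if_neg (by omega), mul_neg, mul_comm]
  · rw [Finset.sum_eq_single_of_mem ⟨j + 1, by omega⟩ (Finset.mem_univ _) fun k _ hk => ?_,
      if_pos rfl, mul_one]
    rw [if_neg (fun h => hk (Fin.ext h)), mul_zero]

lemma zeroExtend_eq_neg_sum_mul_triEntry (c : ℕ → F) (hc : c n = 1)
    (hd : d (n - 1) = -c (n - 1) - ∑ i ∈ Finset.range (n - 1), d i) (b : Fin (n - 1) → F)
    (hb : ∀ k : Fin (n - 1),
      b k = -∑ i ∈ Finset.Icc (k : ℕ) n, c i * hfun d (i - (k : ℕ)) ((k : ℕ) + 1))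
    {i : ℕ} (hi : i < n) :
    zeroExtend b i = -∑ k ∈ Finset.range (n + 1), c k * triEntry d i k := by
  by_cases hi' : i < n - 1
  · rw [zeroExtend, dif_pos hi', hb, sum_Icc_mul_hfun_eq_sum_range]
  obtain ⟨m, rfl⟩ : ∃ m, n = m + 1 := ⟨n - 1, by omega⟩
  obtain rfl : m = i := by omega
  have below : ∑ k ∈ Finset.range m, c k * triEntry d m k = 0 :=
    Finset.sum_eq_zero fun k hk => by rw [triEntry_of_lt d (Finset.mem_range.1 hk), mul_zero]
  have top : triEntry d m (m + 1) = ∑ k ∈ Finset.range m, d k + d m := by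
    rw [triEntry, if_pos (by omega), Nat.add_sub_cancel_left, hfun_one, Finset.sum_range_succ]
  rw [Nat.add_sub_cancel] at hd
  rw [zeroExtend_of_le b (by omega), Finset.sum_range_succ, Finset.sum_range_succ, below, hc, top,
    triEntry_self, hd]
  ring

end matrices

theorem stmt5_general {F : Type*} [Field F] (n : ℕ)
    (c : ℕ → F) (hc : c n = 1) (d : ℕ → F)
    (hd : d (n - 1) = -c (n - 1) - ∑ i ∈ Finset.range (n - 1), d i)
    (b : Fin (n - 1) → F)
    (hb : ∀ k : Fin (n - 1),
      b k = -∑ i ∈ Finset.Icc (k : ℕ) n, c i * hfun d (i - (k : ℕ)) ((k : ℕ) + 1)) :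
    matA n d b * matT n d = matT n d * compMat n c := by
  ext i j
  rw [matA_mul_matT_apply, matT_mul_compMat_apply]
  by_cases hj : (j : ℕ) = n - 1
  · have step := triEntry_succ_right d i (n - 1)
    rw [Nat.sub_add_cancel i.pos] at step
    rw [if_pos hj, hj, triEntry_self, mul_one, ← step,
      zeroExtend_eq_neg_sum_mul_triEntry d c hc hd b hb i.is_lt, Finset.sum_range_succ, hc,
      one_mul]
    ring
  · rw [if_neg hj, triEntry_of_lt d (show (j : ℕ) < n - 1 by omega), mul_zero, add_zero,
      triEntry_succ_right]

theorem stmt5 {F : Type*} [Field F] (n : ℕ) (hn : 1 ≤ n)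
    (c : ℕ → F) (hc : c n = 1) (d : ℕ → F)
    (hd : d (n - 1) = -c (n - 1) - ∑ i ∈ Finset.range (n - 1), d i)
    (b : Fin (n - 1) → F)
    (hb : ∀ k : Fin (n - 1),
      b k = -∑ i ∈ Finset.Icc (k : ℕ) n, c i * hfun d (i - (k : ℕ)) ((k : ℕ) + 1)) :
    matA n d b * matT n d = matT n d * compMat n c :=
  stmt5_general n c hc d hd b hb
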